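/- Let m ≥ 2, p ≥ 1, n = mp, let σ be a treatment-symmetric design on even assignments, and let v, w ∈ ℝⁿ. For treatments k ≠ l and k' ≠ l' define C = Σ_W σ(W) B_{kl}(W, v) B_{k'l'}(W, w) and Z = Σ_W σ(W) B_{12}(W, v) B_{12}(W, w). Then: Σ_W σ(W) B_{kl}(W, v) = 0; C = Z if (k,l) = (k',l'); C = −Z if (k,l) = (l',k'); C = Z/2 if k = k' and l ≠ l', or if l = l' and k ≠ k'; C = −Z/2 if k = l' and l ≠ k', or if l = k' and k ≠ l'; and C = 0 if the four indices k, l, k', l' are all distinct. -/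

import Mathlib

/-!
Write `B_{kl}(W, x) = c (S_k(W, x) - S_l(W, x))`, where `S_k(W, x)` is the total of `x` over the
units assigned to `k`. Treatment symmetry makes the cross moment `E[S_a(v) S_b(w)]` invariant
under relabelling the treatments, and the permutations act transitively on ordered pairs of
distinct treatments, so this moment takes one value `α` on the diagonal and one value `β` off it.
Expanding bilinearly, `E[B_{kl}(v) B_{k'l'}(w)] = c² (α - β) ⟪e_k - e_l, e_{k'} - e_{l'}⟫`, and
every case of the theorem is a value of that inner product. Likewise `E[S_a(v)]` does not depend
on `a`, so the imbalances have mean zero.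
-/

open Finset

namespace TreatmentSymmetric

variable {ι κ : Type*} [Fintype ι] [DecidableEq ι] [Fintype κ] [DecidableEq κ]

def treatmentSum (W : ι → κ) (k : κ) (x : ι → ℝ) : ℝ :=
  ∑ i, if W i = k then x i else 0

def imbalance (c : ℝ) (W : ι → κ) (k l : κ) (x : ι → ℝ) : ℝ :=
  c * (treatmentSum W k x - treatmentSum W l x)

def crossMoment (σ : (ι → κ) → ℝ) (v w : ι → ℝ) (a b : κ) : ℝ :=
  ∑ W, σ W * treatmentSum W a v * treatmentSum W b w

/-- The inner product of the contrasts `e_k - e_l` and `e_{k'} - e_{l'}`. -/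
def contrastInner (k l k' l' : κ) : ℝ :=
  (if k = k' then 1 else 0) - (if k = l' then 1 else 0) -
    (if l = k' then 1 else 0) + (if l = l' then 1 else 0)

omit [DecidableEq ι] [Fintype κ] in
theorem treatmentSum_perm (π : Equiv.Perm κ) (W : ι → κ) (k : κ) (x : ι → ℝ) :
    treatmentSum (fun i => π (W i)) (π k) x = treatmentSum W k x := by
  simp only [treatmentSum, Equiv.apply_eq_iff_eq]

omit [Fintype κ] in
theorem exists_perm_apply_pair {a b c d : κ} (hab : a ≠ b) (hcd : c ≠ d) :
    ∃ π : Equiv.Perm κ, π a = c ∧ π b = d := by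
  have hb : Equiv.swap a c b ≠ c := fun h =>
    hab ((Equiv.swap a c).injective (by rw [h, Equiv.swap_apply_left]))
  refine ⟨Equiv.swap (Equiv.swap a c b) d * Equiv.swap a c, ?_, ?_⟩
  · simp only [Equiv.Perm.mul_apply, Equiv.swap_apply_left]
    exact Equiv.swap_apply_of_ne_of_ne hb.symm hcd
  · simp only [Equiv.Perm.mul_apply, Equiv.swap_apply_left]

section Symmetric

variable {σ : (ι → κ) → ℝ} (hσ : ∀ (π : Equiv.Perm κ) (W : ι → κ), σ (fun i => π (W i)) = σ W)
include hσ

omit [DecidableEq κ] in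
theorem sum_mul_comp_perm (π : Equiv.Perm κ) (F : (ι → κ) → ℝ) :
    ∑ W, σ W * F (fun i => π (W i)) = ∑ W, σ W * F W := by
  conv_lhs => enter [2, W, 1]; rw [← hσ π W]
  exact Equiv.sum_comp (Equiv.piCongrRight fun _ => π) (fun W => σ W * F W)

theorem sum_mul_treatmentSum_perm (π : Equiv.Perm κ) (a : κ) (x : ι → ℝ) :
    ∑ W, σ W * treatmentSum W (π a) x = ∑ W, σ W * treatmentSum W a x := by
  rw [← sum_mul_comp_perm hσ π]
  simp only [treatmentSum_perm]

theorem sum_mul_imbalance_eq_zero (c : ℝ) (k l : κ) (x : ι → ℝ) :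
    ∑ W, σ W * imbalance c W k l x = 0 := by
  have hmean : ∑ W, σ W * treatmentSum W l x = ∑ W, σ W * treatmentSum W k x := by
    simpa using sum_mul_treatmentSum_perm hσ (Equiv.swap k l) k x
  simp only [imbalance, mul_left_comm (σ _) c, ← mul_sum, mul_sub, sum_sub_distrib, hmean,
    sub_self]

theorem crossMoment_perm (v w : ι → ℝ) (π : Equiv.Perm κ) (a b : κ) :
    crossMoment σ v w (π a) (π b) = crossMoment σ v w a b := by
  simp only [crossMoment, mul_assoc]
  rw [← sum_mul_comp_perm hσ π]
  simp only [treatmentSum_perm]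

theorem crossMoment_eq_ite (v w : ι → ℝ) {t₁ t₂ : κ} (ht : t₁ ≠ t₂) (a b : κ) :
    crossMoment σ v w a b =
      if a = b then crossMoment σ v w t₁ t₁ else crossMoment σ v w t₁ t₂ := by
  split_ifs with hab
  · subst hab
    simpa using crossMoment_perm hσ v w (Equiv.swap t₁ a) t₁ t₁
  · obtain ⟨π, hπa, hπb⟩ := exists_perm_apply_pair hab ht
    rw [← hπa, ← hπb, crossMoment_perm hσ]

theorem sum_mul_imbalance_mul_imbalance (c : ℝ) (v w : ι → ℝ) {t₁ t₂ : κ} (ht : t₁ ≠ t₂)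
    (k l k' l' : κ) :
    ∑ W, σ W * imbalance c W k l v * imbalance c W k' l' w =
      c ^ 2 * (crossMoment σ v w t₁ t₁ - crossMoment σ v w t₁ t₂) *
        contrastInner k l k' l' := by
  have hexpand : ∑ W, σ W * imbalance c W k l v * imbalance c W k' l' w =
      c ^ 2 * (crossMoment σ v w k k' - crossMoment σ v w k l' -
        crossMoment σ v w l k' + crossMoment σ v w l l') := by
    simp only [crossMoment, mul_sum, ← sum_sub_distrib, ← sum_add_distrib]
    exact sum_congr rfl fun W _ => by simp only [imbalance]; ring
  rw [hexpand]
  simp only [crossMoment_eq_ite hσ v w ht k, crossMoment_eq_ite hσ v w ht l, contrastInner]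
  split_ifs <;> ring

end Symmetric

end TreatmentSymmetric

open TreatmentSymmetric in
theorem stmt16_general (m p n : ℕ)
    (σ : (Fin n → Fin m) → ℝ)
    (hsym : ∀ (π : Equiv.Perm (Fin m)) (W : Fin n → Fin m), σ (fun i => π (W i)) = σ W)
    (B : (Fin n → Fin m) → Fin m → Fin m → (Fin n → ℝ) → ℝ)
    (hB : ∀ W k l x, B W k l x = (1 / (p : ℝ)) *
        ∑ i, (((if W i = k then (1 : ℝ) else 0) - (if W i = l then 1 else 0)) * x i))
    (t₁ t₂ : Fin m) (ht₁ : (t₁ : ℕ) = 0) (ht₂ : (t₂ : ℕ) = 1)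
    (v w : Fin n → ℝ)
    (k l k' l' : Fin m) (hkl : k ≠ l) (hk'l' : k' ≠ l')
    (C Z : ℝ)
    (hC : C = ∑ W : Fin n → Fin m, σ W * B W k l v * B W k' l' w)
    (hZ : Z = ∑ W : Fin n → Fin m, σ W * B W t₁ t₂ v * B W t₁ t₂ w) :
    (∑ W : Fin n → Fin m, σ W * B W k l v = 0) ∧
    (k = k' ∧ l = l' → C = Z) ∧
    (k = l' ∧ l = k' → C = -Z) ∧
    (k = k' ∧ l ≠ l' → C = Z / 2) ∧
    (l = l' ∧ k ≠ k' → C = Z / 2) ∧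
    (k = l' ∧ l ≠ k' → C = -Z / 2) ∧
    (l = k' ∧ k ≠ l' → C = -Z / 2) ∧
    (k ≠ k' ∧ k ≠ l' ∧ l ≠ k' ∧ l ≠ l' → C = 0) := by
  have hB_eq : B = imbalance (1 / (p : ℝ)) := by
    funext W k l x
    simp only [hB, imbalance, treatmentSum, ← sum_sub_distrib]
    exact congrArg _ (sum_congr rfl fun i _ => by split_ifs <;> ring)
  subst hB_eq
  have ht : t₁ ≠ t₂ := fun h => by simp [h, ht₂] at ht₁
  have hCZ : C = Z / 2 * contrastInner k l k' l' := by
    rw [hC, hZ, sum_mul_imbalance_mul_imbalance hsym _ _ _ ht,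
      sum_mul_imbalance_mul_imbalance hsym _ _ _ ht]
    simp only [contrastInner, if_pos, if_neg ht, if_neg ht.symm]
    ring
  refine ⟨sum_mul_imbalance_eq_zero hsym _ k l v, ?_, ?_, ?_, ?_, ?_, ?_, ?_⟩ <;>
    rintro ⟨h₁, h₂⟩ <;> subst_vars <;>
    simp_all [contrastInner, hkl.symm, hk'l'.symm] <;> ring

/-- Covariance structure of imbalances under a treatment-symmetric design: with
`C = ∑_W σ(W) B_{kl}(W,v) B_{k'l'}(W,w)` and `Z = ∑_W σ(W) B_{12}(W,v) B_{12}(W,w)`,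
one has `E[B_{kl}(v)] = 0`, and `C` equals `Z`, `−Z`, `Z/2`, `−Z/2`, or `0` according
to the pattern of coincidences among the treatment indices. -/
theorem stmt16 (m p n : ℕ) (hm : 2 ≤ m) (hp : 1 ≤ p) (hn : n = m * p)
    (σ : (Fin n → Fin m) → ℝ)
    (hσ0 : ∀ W, 0 ≤ σ W)
    (hσ1 : ∑ W : Fin n → Fin m, σ W = 1)
    (hsupp : ∀ W : Fin n → Fin m, σ W ≠ 0 →
        ∀ k, (Finset.univ.filter fun i => W i = k).card = p)
    (hsym : ∀ (π : Equiv.Perm (Fin m)) (W : Fin n → Fin m), σ (fun i => π (W i)) = σ W)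
    (B : (Fin n → Fin m) → Fin m → Fin m → (Fin n → ℝ) → ℝ)
    (hB : ∀ W k l x, B W k l x = (1 / (p : ℝ)) *
        ∑ i, (((if W i = k then (1 : ℝ) else 0) - (if W i = l then 1 else 0)) * x i))
    (t₁ t₂ : Fin m) (ht₁ : (t₁ : ℕ) = 0) (ht₂ : (t₂ : ℕ) = 1)
    (v w : Fin n → ℝ)
    (k l k' l' : Fin m) (hkl : k ≠ l) (hk'l' : k' ≠ l')
    (C Z : ℝ)
    (hC : C = ∑ W : Fin n → Fin m, σ W * B W k l v * B W k' l' w)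
    (hZ : Z = ∑ W : Fin n → Fin m, σ W * B W t₁ t₂ v * B W t₁ t₂ w) :
    (∑ W : Fin n → Fin m, σ W * B W k l v = 0) ∧
    (k = k' ∧ l = l' → C = Z) ∧
    (k = l' ∧ l = k' → C = -Z) ∧
    (k = k' ∧ l ≠ l' → C = Z / 2) ∧
    (l = l' ∧ k ≠ k' → C = Z / 2) ∧
    (k = l' ∧ l ≠ k' → C = -Z / 2) ∧
    (l = k' ∧ k ≠ l' → C = -Z / 2) ∧
    (k ≠ k' ∧ k ≠ l' ∧ l ≠ k' ∧ l ≠ l' → C = 0) :=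
  stmt16_general m p n σ hsym B hB t₁ t₂ ht₁ ht₂ v w k l k' l' hkl hk'l' C Z hC hZ
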